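/- arXiv:0706.1786 — 6 statements merged into one kernel-verified Lean document; each statement's English description precedes it below -/
import Mathlib

section
/- Let d ≥ 3, 1 ≤ m ≤ d-1, and Q(x) = x₁²+⋯+x_m² − x_{m+1}²−⋯−x_d². Then for any bounded set X ⊆ ℝ^d contained in the unit ball, and any 0 < ε ≤ 1, the Lebesgue volume of {x ∈ X : |Q(x)| ≤ ε} is at most a constant (depending only on d) times ε. -/
/-!
Since `d ≥ 3`, two coordinates `i ≠ j` carry the same sign in `Q`, so after possibly replacing `Q`
by `-Q` we have `Q x = x_i² + x_j² + R(x')`, where `x'` collects the other coordinates. The unit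
ball lies in the cube `[-1, 1]^d`; for fixed `x'` in the cube, `|Q x| ≤ ε` confines `(x_i, x_j)` to
an annulus `{r² ∈ [-R(x') - ε, -R(x') + ε]}` of area at most `2πε`, and Fubini bounds the volume by
`2πε · 2^(d-2)`.
-/

open MeasureTheory Real Set

theorem volume_sq_norm_mem_Icc_le {E : Type*} [NormedAddCommGroup E] [InnerProductSpace ℝ E]
    [FiniteDimensional ℝ E] [MeasurableSpace E] [BorelSpace E] (hE : Module.finrank ℝ E = 2)
    (a b : ℝ) :
    volume {v : E | ‖v‖ ^ 2 ∈ Icc a b} ≤ ENNReal.ofReal (π * (b - a)) := by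
  rcases lt_or_ge b a with hba | hab
  · have hempty : {v : E | ‖v‖ ^ 2 ∈ Icc a b} = ∅ :=
      eq_empty_of_forall_notMem fun v hv => (hv.1.trans hv.2).not_gt hba
    rw [hempty, measure_empty]
    exact zero_le
  have : Nontrivial E := Module.nontrivial_of_finrank_eq_succ hE
  have hsub : {v : E | ‖v‖ ^ 2 ∈ Icc a b} ⊆ Metric.closedBall 0 √b \ Metric.ball 0 √a := by
    rintro v ⟨hav, hvb⟩
    simp only [mem_sdiff, Metric.mem_closedBall, Metric.mem_ball, dist_zero_right, not_lt]
    exact ⟨le_sqrt_of_sq_le hvb, (sqrt_le_left (norm_nonneg v)).2 hav⟩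
  have hball : Metric.ball (0 : E) √a ⊆ Metric.closedBall 0 √b :=
    Metric.ball_subset_closedBall.trans (Metric.closedBall_subset_closedBall (sqrt_le_sqrt hab))
  have hvol (r : ℝ) : ENNReal.ofReal √r ^ 2 * ENNReal.ofReal (π ^ 1 / (Nat.factorial 1 : ℕ)) =
      ENNReal.ofReal (π * max r 0) := by
    rw [← ENNReal.ofReal_pow (sqrt_nonneg r), sq_sqrt', ← ENNReal.ofReal_mul (by positivity)]
    simp [mul_comm]
  calc volume {v : E | ‖v‖ ^ 2 ∈ Icc a b}
      ≤ volume (Metric.closedBall (0 : E) √b \ Metric.ball 0 √a) := measure_mono hsub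
    _ = ENNReal.ofReal (π * max b 0) - ENNReal.ofReal (π * max a 0) := by
      rw [measure_sdiff hball measurableSet_ball.nullMeasurableSet measure_ball_lt_top.ne,
        InnerProductSpace.volume_closedBall_of_dim_even (k := 1) hE,
        InnerProductSpace.volume_ball_of_dim_even (k := 1) hE, hE, hvol, hvol]
    _ ≤ ENNReal.ofReal (π * (b - a)) := by
      rw [← ENNReal.ofReal_sub _ (by positivity), ← mul_sub]
      refine ENNReal.ofReal_le_ofReal (mul_le_mul_of_nonneg_left ?_ pi_nonneg)
      rcases le_total a 0 with ha | ha <;> rcases le_total b 0 with hb | hb <;>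
        simp only [max_eq_left, max_eq_right, *] <;> linarith

theorem volume_sum_sq_mem_Icc_le {ι : Type*} [Fintype ι] (hι : Fintype.card ι = 2) (a b : ℝ) :
    volume {u : ι → ℝ | ∑ k, u k ^ 2 ∈ Icc a b} ≤ ENNReal.ofReal (π * (b - a)) := by
  rw [← (EuclideanSpace.volume_preserving_symm_measurableEquiv_toLp ι).measure_preimage_equiv]
  convert volume_sq_norm_mem_Icc_le (E := EuclideanSpace ℝ ι) (by simp [hι]) a b using 3
  ext v
  simp [EuclideanSpace.norm_sq_eq]

theorem MeasureTheory.Measure.prod_apply_le_mul_of_forall_slice_le {α β : Type*}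
    [MeasurableSpace α] [MeasurableSpace β] {μ : Measure α} {ν : Measure β} [SFinite μ]
    [SFinite ν] {E : Set (α × β)} (hE : MeasurableSet E) {B : Set β} (hB : MeasurableSet B)
    (hEB : E ⊆ univ ×ˢ B) {c : ENNReal} (hslice : ∀ z ∈ B, μ ((·, z) ⁻¹' E) ≤ c) :
    μ.prod ν E ≤ c * ν B := by
  rw [Measure.prod_apply_symm hE, ← lintegral_indicator_const hB]
  refine lintegral_mono fun z => ?_
  by_cases hz : z ∈ B
  · simpa [hz] using hslice z hz
  · have : (·, z) ⁻¹' E = ∅ := eq_empty_of_forall_notMem fun u hu => hz (hEB hu).2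
    simp [this]

theorem volume_pi_Icc_neg_one_one (κ : Type*) [Fintype κ] :
    volume (univ.pi fun _ : κ => Icc (-1 : ℝ) 1) = 2 ^ Fintype.card κ := by
  rw [volume_pi_pi]
  simp [Real.volume_Icc, one_add_one_eq_two]

theorem sum_mul_sq_eq_sum_sq_add_sum_compl {ι : Type*} [Fintype ι] {σ : ι → ℝ}
    (p : ι → Prop) [DecidablePred p] (hσ : ∀ k, p k → σ k = 1) (x : ι → ℝ) :
    ∑ k, σ k * x k ^ 2 = ∑ k : {k // p k}, x k ^ 2 + ∑ k : {k // ¬p k}, σ k * x k ^ 2 := by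
  rw [← Fintype.sum_subtype_add_sum_subtype p]
  congr 1
  exact Fintype.sum_congr _ _ fun k => by rw [hσ k k.2, one_mul]

theorem volume_pi_Icc_inter_abs_sum_mul_sq_le {ι : Type*} [Fintype ι] [DecidableEq ι]
    {σ : ι → ℝ} {i j : ι} (hij : i ≠ j) (hσi : σ i = 1) (hσj : σ j = 1) (ε : ℝ) :
    volume {x : ι → ℝ | x ∈ univ.pi (fun _ => Icc (-1) 1) ∧ |∑ k, σ k * x k ^ 2| ≤ ε} ≤
      ENNReal.ofReal (2 * π * ε) * 2 ^ Fintype.card ι := by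
  let p : ι → Prop := fun k => k = i ∨ k = j
  have hσ (k) (hk : p k) : σ k = 1 := by rcases hk with rfl | rfl <;> assumption
  have hcard : Fintype.card {k // p k} = 2 := by
    rw [Fintype.card_subtype, show Finset.univ.filter p = {i, j} by ext; simp [p],
      Finset.card_pair hij]
  let R : ({k // ¬p k} → ℝ) → ℝ := fun z => ∑ k : {k // ¬p k}, σ k * z k ^ 2
  let E : Set (({k // p k} → ℝ) × ({k // ¬p k} → ℝ)) :=
    {y | y.2 ∈ univ.pi (fun _ => Icc (-1) 1) ∧ |∑ k : {k // p k}, y.1 k ^ 2 + R y.2| ≤ ε}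
  have hmeas : Measurable fun y : ({k // p k} → ℝ) × ({k // ¬p k} → ℝ) =>
      |∑ k : {k // p k}, y.1 k ^ 2 + R y.2| := by fun_prop
  have hE : MeasurableSet E :=
    ((MeasurableSet.univ_pi fun _ => measurableSet_Icc).preimage measurable_snd).inter
      (measurableSet_le hmeas measurable_const)
  have hslice (z) : volume ((·, z) ⁻¹' E) ≤ ENNReal.ofReal (π * (2 * ε)) := by
    calc volume ((·, z) ⁻¹' E)
        ≤ volume {u : {k // p k} → ℝ | ∑ k, u k ^ 2 ∈ Icc (-R z - ε) (-R z + ε)} :=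
          measure_mono fun u hu => by
            have := abs_le.1 hu.2
            constructor <;> linarith
      _ ≤ ENNReal.ofReal (π * (2 * ε)) := by
          convert volume_sum_sq_mem_Icc_le hcard _ _ using 3
          ring
  calc volume {x : ι → ℝ | x ∈ univ.pi (fun _ => Icc (-1) 1) ∧ |∑ k, σ k * x k ^ 2| ≤ ε}
      ≤ volume (MeasurableEquiv.piEquivPiSubtypeProd (fun _ => ℝ) p ⁻¹' E) := by
        refine measure_mono fun x ⟨hx, hxQ⟩ => ⟨fun k _ => hx k trivial, ?_⟩
        rwa [sum_mul_sq_eq_sum_sq_add_sum_compl p hσ] at hxQ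
    _ = volume E :=
        (volume_preserving_piEquivPiSubtypeProd (fun _ : ι => ℝ) p).measure_preimage_equiv E
    _ ≤ ENNReal.ofReal (π * (2 * ε)) *
          volume (univ.pi fun _ : {k // ¬p k} => Icc (-1 : ℝ) 1) := by
        rw [Measure.volume_eq_prod]
        exact Measure.prod_apply_le_mul_of_forall_slice_le hE
          (MeasurableSet.univ_pi fun _ => measurableSet_Icc) (fun y hy => ⟨trivial, hy.1⟩)
          fun z _ => hslice z
    _ ≤ ENNReal.ofReal (2 * π * ε) * 2 ^ Fintype.card ι := by
        rw [volume_pi_Icc_neg_one_one, mul_left_comm, ← mul_assoc]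
        gcongr
        · exact one_le_two
        · exact Fintype.card_subtype_le _

theorem volume_pi_Icc_inter_abs_sum_mul_sq_le_of_abs_eq_one {ι : Type*} [Fintype ι]
    [DecidableEq ι] {σ : ι → ℝ} {i j : ι} (hij : i ≠ j) (hσij : σ i = σ j) (hσi : |σ i| = 1)
    (ε : ℝ) :
    volume {x : ι → ℝ | x ∈ univ.pi (fun _ => Icc (-1) 1) ∧ |∑ k, σ k * x k ^ 2| ≤ ε} ≤
      ENNReal.ofReal (2 * π * ε) * 2 ^ Fintype.card ι := by
  have hσσ : σ i * σ i = 1 := by rw [← abs_mul_self, abs_mul, hσi, one_mul]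
  convert volume_pi_Icc_inter_abs_sum_mul_sq_le (σ := fun k => σ i * σ k) hij hσσ
    (hσij ▸ hσσ) ε using 6 with x
  simp only [mul_assoc, ← Finset.mul_sum, abs_mul, hσi, one_mul]

theorem stmt3_general (d m : ℕ) (hd : 3 ≤ d) :
    ∃ C : ℝ, 0 < C ∧
      ∀ X : Set (EuclideanSpace ℝ (Fin d)), (∀ x ∈ X, ‖x‖ ≤ 1) →
        ∀ ε : ℝ, 0 < ε → ε ≤ 1 →
          volume {x ∈ X |
              |∑ i : Fin d, (if (i : ℕ) < m then (x i) ^ 2 else -((x i) ^ 2))| ≤ ε} ≤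
            ENNReal.ofReal (C * ε) := by
  refine ⟨2 * π * 2 ^ d, by positivity, fun X hX ε _ _ => ?_⟩
  obtain ⟨i, j, hij, hsame⟩ := Fintype.exists_ne_map_eq_of_card_lt
    (fun k : Fin d => decide ((k : ℕ) < m)) (by rw [Fintype.card_bool, Fintype.card_fin]; omega)
  let σ : Fin d → ℝ := fun k => if (k : ℕ) < m then 1 else -1
  have hσij : σ i = σ j := by simp only [σ, decide_eq_decide.1 hsame]
  have hσi : |σ i| = 1 := by unfold σ; split_ifs <;> simp
  have hQ (x : EuclideanSpace ℝ (Fin d)) (k : Fin d) :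
      (if (k : ℕ) < m then x k ^ 2 else -(x k ^ 2)) = σ k * x k ^ 2 := by
    unfold σ; split_ifs <;> ring
  calc volume {x ∈ X | |∑ k : Fin d, (if (k : ℕ) < m then x k ^ 2 else -(x k ^ 2))| ≤ ε}
      ≤ volume ((MeasurableEquiv.toLp 2 (Fin d → ℝ)).symm ⁻¹'
          {x | x ∈ univ.pi (fun _ => Icc (-1) 1) ∧ |∑ k, σ k * x k ^ 2| ≤ ε}) := by
        refine measure_mono fun x ⟨hxX, hxQ⟩ => ⟨fun k _ => abs_le.1 ?_, ?_⟩
        · exact (PiLp.norm_apply_le x k).trans (hX x hxX)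
        · change |∑ k, σ k * x k ^ 2| ≤ ε
          simpa only [hQ] using hxQ
    _ = volume {x : Fin d → ℝ | x ∈ univ.pi (fun _ => Icc (-1) 1) ∧ |∑ k, σ k * x k ^ 2| ≤ ε} :=
        (EuclideanSpace.volume_preserving_symm_measurableEquiv_toLp _).measure_preimage_equiv _
    _ ≤ ENNReal.ofReal (2 * π * ε) * 2 ^ d := by
        simpa only [Fintype.card_fin] using
          volume_pi_Icc_inter_abs_sum_mul_sq_le_of_abs_eq_one hij hσij hσi ε
    _ = ENNReal.ofReal (2 * π * 2 ^ d * ε) := by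
        rw [eq_comm, mul_right_comm, ENNReal.ofReal_mul (by positivity),
          ENNReal.ofReal_pow zero_le_two, ENNReal.ofReal_ofNat]

/-- Let `d ≥ 3`, `1 ≤ m ≤ d-1`, and
`Q(x) = x₁²+⋯+x_m² − x_{m+1}²−⋯−x_d²`.  For any set `X` contained in the unit ball of
`ℝ^d` and any `0 < ε ≤ 1`, the Lebesgue volume of `{x ∈ X : |Q(x)| ≤ ε}` is at most a
constant (depending only on `d`) times `ε`. -/
theorem stmt3 (d m : ℕ) (hd : 3 ≤ d) (hm : 1 ≤ m) (hmd : m ≤ d - 1) :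
    ∃ C : ℝ, 0 < C ∧
      ∀ X : Set (EuclideanSpace ℝ (Fin d)), (∀ x ∈ X, ‖x‖ ≤ 1) →
        ∀ ε : ℝ, 0 < ε → ε ≤ 1 →
          volume {x ∈ X |
              |∑ i : Fin d, (if (i : ℕ) < m then (x i) ^ 2 else -((x i) ^ 2))| ≤ ε} ≤
            ENNReal.ofReal (C * ε) :=
  stmt3_general d m hd
end

section
/- Let d ≥ 3, 1 ≤ m ≤ d-1, and Q(k) = k₁²+⋯+k_m² − k_{m+1}²−⋯−k_d². There is a constant C (depending only on d) such that for all q ∈ ℝ^d, all integers j ≤ 0, all 0 < ε < 1/2 and all M > 1, vol{k ∈ ℝ^d : |Q(k)| ≤ M^j, |k - q| ≤ M^{εj}} ≤ C · M^j · M^{(d-2)εj}. -/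
/-!
Among any three coordinates two carry the same sign in `Q`, so up to an overall sign
`Q(k) = x² + y² + R`, where `(x, y)` are those two coordinates and `R` depends only on the
remaining `d - 2` coordinates. Those lie in a cube of side `2 M^{εj}` containing the ball
around `q`, and for each of their values `|Q| ≤ M^j` confines `(x, y)` to an annulus
`t ≤ x² + y² ≤ t + 2 M^j`, of area at most `2π M^j` whatever `t` is. Fubini then gives the
bound with `C = 2π · 2^{d-2}`.
-/

open MeasureTheory Metric Real

lemma EuclideanSpace.volume_setOf_norm_sq_mem_Icc_le {κ : Type*} [Fintype κ]
    (hκ : Fintype.card κ = 2) {t u : ℝ} (htu : t ≤ u) :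
    volume {z : EuclideanSpace ℝ κ | ‖z‖ ^ 2 ∈ Set.Icc t u} ≤ ENNReal.ofReal (π * (u - t)) := by
  have : Nonempty κ := Fintype.card_pos_iff.mp (by omega)
  -- `√t = 0` for `t < 0`, so no case split on the sign of `t` is needed.
  have hsub : {z : EuclideanSpace ℝ κ | ‖z‖ ^ 2 ∈ Set.Icc t u} ⊆
      closedBall 0 √u \ ball 0 √t := fun z ⟨hzt, hzu⟩ => by
    have hsqrt := sqrt_sq (norm_nonneg z)
    simp only [Set.mem_sdiff, mem_closedBall, mem_ball, dist_zero_right, not_lt]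
    exact ⟨hsqrt ▸ sqrt_le_sqrt hzu, hsqrt ▸ sqrt_le_sqrt hzt⟩
  refine (measure_mono hsub).trans ?_
  rw [measure_sdiff_le_iff_le_add measurableSet_ball.nullMeasurableSet
    (ball_subset_closedBall.trans (closedBall_subset_closedBall (sqrt_le_sqrt htu)))
    measure_ball_lt_top.ne, EuclideanSpace.volume_closedBall, EuclideanSpace.volume_ball, hκ]
  have hπ : √π ^ 2 / Gamma ((2 : ℕ) / 2 + 1) = π := by
    norm_num [sq_sqrt pi_nonneg, Gamma_two]
  rw [hπ, ← ENNReal.ofReal_pow (sqrt_nonneg _), ← ENNReal.ofReal_pow (sqrt_nonneg _), sq_sqrt',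
    sq_sqrt', ← ENNReal.ofReal_mul (by positivity), ← ENNReal.ofReal_mul (by positivity),
    ← ENNReal.ofReal_add (by positivity) (mul_nonneg pi_nonneg (by linarith))]
  refine ENNReal.ofReal_le_ofReal ?_
  have : max u 0 ≤ max t 0 + (u - t) :=
    max_le (by linarith [le_max_left t 0]) (by linarith [le_max_right t 0])
  nlinarith [pi_pos]

lemma volume_setOf_sum_sq_mem_Icc_le {κ : Type*} [Fintype κ]
    (hκ : Fintype.card κ = 2) {t u : ℝ} (htu : t ≤ u) :
    volume {x : κ → ℝ | ∑ i, x i ^ 2 ∈ Set.Icc t u} ≤ ENNReal.ofReal (π * (u - t)) := by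
  rw [← (EuclideanSpace.volume_preserving_symm_measurableEquiv_toLp κ).measure_preimage_equiv]
  have hannulus := EuclideanSpace.volume_setOf_norm_sq_mem_Icc_le hκ htu
  simp only [EuclideanSpace.real_norm_sq_eq] at hannulus
  exact hannulus

lemma MeasureTheory.Measure.prod_apply_le_mul_of_slice_le {α β : Type*} [MeasurableSpace α]
    [MeasurableSpace β] {μ : Measure α} {ν : Measure β} [SFinite μ] [SFinite ν]
    {s : Set (α × β)} (hs : MeasurableSet s) {t : Set β} (hst : ∀ z ∈ s, z.2 ∈ t) {c : ENNReal}
    (hc : ∀ y ∈ t, μ ((·, y) ⁻¹' s) ≤ c) : μ.prod ν s ≤ c * ν t := by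
  rw [Measure.prod_apply_symm hs]
  refine (lintegral_mono fun y => ?_).trans (lintegral_indicator_const_le t c)
  by_cases hy : y ∈ t
  · simpa [hy] using hc y hy
  · have : (·, y) ⁻¹' s = ∅ := Set.eq_empty_of_forall_notMem fun x hx => hy (hst _ hx)
    simp [this]

lemma Fintype.sum_dite {ι M : Type*} [Fintype ι] [AddCommMonoid M] {p : ι → Prop}
    [DecidablePred p] (f : ∀ i, p i → M) (g : ∀ i, ¬p i → M) :
    ∑ i, (if h : p i then f i h else g i h) =
      ∑ i : {i // p i}, f i i.2 + ∑ i : {i // ¬p i}, g i i.2 := by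
  rw [← Fintype.sum_subtype_add_sum_subtype p]
  congr 1 <;> exact Finset.sum_congr rfl fun i _ => by simp [i.2]

lemma volume_abs_sum_mul_sq_le {ι : Type*} [Fintype ι] (σ : ι → ℝ) {p : ι → Prop}
    [DecidablePred p] (hp : Fintype.card {i // p i} = 2) (hσ : ∀ i, p i → σ i = 1) (q : ι → ℝ)
    {δ r : ℝ} (hδ : 0 ≤ δ) (hr : 0 ≤ r) :
    volume {k : ι → ℝ | |∑ i, σ i * k i ^ 2| ≤ δ ∧ dist k q ≤ r} ≤
      ENNReal.ofReal (2 * π * δ) * ENNReal.ofReal ((2 * r) ^ (Fintype.card ι - 2)) := by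
  set S := {k : ι → ℝ | |∑ i, σ i * k i ^ 2| ≤ δ ∧ dist k q ≤ r}
  have hS : MeasurableSet S := by measurability
  set e := MeasurableEquiv.piEquivPiSubtypeProd (fun _ : ι => ℝ) p
  have hcard : Fintype.card {i // ¬p i} = Fintype.card ι - 2 := by
    rw [Fintype.card_subtype_compl, hp]
  rw [← ((volume_preserving_piEquivPiSubtypeProd _ _).symm e).measure_preimage_equiv,
    Measure.volume_eq_prod, ← hcard, ← Real.volume_pi_closedBall (fun i : {i // ¬p i} => q i) hr]
  refine Measure.prod_apply_le_mul_of_slice_le (e.symm.measurable hS) (fun z hz => ?_)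
    fun y _ => ?_
  · refine (dist_pi_le_iff hr).2 fun i => ?_
    simpa [e, i.2] using (dist_le_pi_dist _ q i).trans hz.2
  · set R := ∑ i : {i // ¬p i}, σ i * y i ^ 2
    have hslice : (·, y) ⁻¹' (e.symm ⁻¹' S) ⊆ {x | ∑ i, x i ^ 2 ∈ Set.Icc (-δ - R) (δ - R)} := by
      intro x hx
      have hQ := hx.1
      simp only [e, MeasurableEquiv.piEquivPiSubtypeProd_symm_apply, dite_pow, mul_dite] at hQ
      rw [Fintype.sum_dite, Finset.sum_congr rfl fun i _ => by rw [hσ i i.2, one_mul]] at hQ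
      constructor <;> linarith [abs_le.mp hQ]
    refine (measure_mono hslice).trans
      ((volume_setOf_sum_sq_mem_Icc_le hp (by linarith)).trans_eq ?_)
    congr 1
    ring

lemma volume_abs_signature_form_le (m : ℕ) {d : ℕ} (hd : 3 ≤ d) (q : EuclideanSpace ℝ (Fin d))
    {δ r : ℝ} (hδ : 0 ≤ δ) (hr : 0 ≤ r) :
    volume {k : EuclideanSpace ℝ (Fin d) |
        |∑ i : Fin d, (if (i : ℕ) < m then (k i) ^ 2 else -((k i) ^ 2))| ≤ δ ∧ dist k q ≤ r} ≤
      ENNReal.ofReal (2 * π * δ) * ENNReal.ofReal ((2 * r) ^ (d - 2)) := by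
  set σ : Fin d → ℝ := fun i => if (i : ℕ) < m then 1 else -1
  obtain ⟨c, s, hc, hs, hσs⟩ : ∃ (c : ℝ) (s : Finset (Fin d)),
      |c| = 1 ∧ s.card = 2 ∧ ∀ i ∈ s, c * σ i = 1 := by
    rcases le_or_gt 2 m with hm | hm
    · refine ⟨1, {⟨0, by omega⟩, ⟨1, by omega⟩}, by simp,
        Finset.card_pair (Fin.ne_of_val_ne (by norm_num)), ?_⟩
      simp [σ]
      omega
    · refine ⟨-1, {⟨1, by omega⟩, ⟨2, by omega⟩}, by simp,
        Finset.card_pair (Fin.ne_of_val_ne (by norm_num)), ?_⟩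
      simp [σ]
      omega
  have hsub : {k : EuclideanSpace ℝ (Fin d) |
        |∑ i : Fin d, (if (i : ℕ) < m then (k i) ^ 2 else -((k i) ^ 2))| ≤ δ ∧ dist k q ≤ r} ⊆
      WithLp.ofLp ⁻¹' {k | |∑ i, c * σ i * k i ^ 2| ≤ δ ∧ dist k q.ofLp ≤ r} := by
    rintro k ⟨hQ, hkq⟩
    refine ⟨?_, (dist_pi_le_iff hr).2 fun i => (PiLp.dist_apply_le k q i).trans hkq⟩
    have : ∑ i, c * σ i * k i ^ 2 =
        c * ∑ i : Fin d, (if (i : ℕ) < m then (k i) ^ 2 else -((k i) ^ 2)) := by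
      rw [Finset.mul_sum]
      exact Finset.sum_congr rfl fun i _ => by simp only [σ]; split_ifs <;> ring
    simpa [this, abs_mul, hc] using hQ
  calc _ ≤ _ := measure_mono hsub
    _ = _ := (EuclideanSpace.volume_preserving_symm_measurableEquiv_toLp _).measure_preimage_equiv _
    _ ≤ _ := by
      simpa using volume_abs_sum_mul_sq_le (fun i => c * σ i) (p := (· ∈ s)) (by simpa using hs)
        hσs q.ofLp hδ hr

theorem stmt6_general (d m : ℕ) (hd : 3 ≤ d) :
    ∃ C : ℝ, 0 < C ∧
      ∀ (q : EuclideanSpace ℝ (Fin d)) (j : ℤ), j ≤ 0 →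
        ∀ ε : ℝ, 0 < ε → ε < 1 / 2 → ∀ M : ℝ, 1 < M →
          volume {k : EuclideanSpace ℝ (Fin d) |
              |∑ i : Fin d, (if (i : ℕ) < m then (k i) ^ 2 else -((k i) ^ 2))| ≤ M ^ j ∧
              dist k q ≤ M ^ (ε * (j : ℝ))} ≤
            ENNReal.ofReal (C * M ^ j * M ^ (((d : ℝ) - 2) * ε * (j : ℝ))) := by
  refine ⟨2 * π * 2 ^ (d - 2), by positivity, fun q j _ ε _ _ M hM => ?_⟩
  have hM0 : 0 < M := by linarith
  refine (volume_abs_signature_form_le m hd q (zpow_pos hM0 j).le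
    (rpow_pos_of_pos hM0 _).le).trans ?_
  rw [← ENNReal.ofReal_mul (by positivity)]
  refine ENNReal.ofReal_le_ofReal (le_of_eq ?_)
  have hpow : (M ^ (ε * j)) ^ (d - 2) = M ^ (((d : ℝ) - 2) * ε * j) := by
    rw [← rpow_natCast, ← rpow_mul hM0.le, Nat.cast_sub (by omega)]
    congr 1
    push_cast
    ring
  rw [mul_pow, hpow]
  ring

/-- Let `d ≥ 3`, `1 ≤ m ≤ d-1`, and `Q` the quadratic form of signature
`(m, d-m)`.  There is a constant `C` (depending only on `d`) such that for all
`q ∈ ℝ^d`, all integers `j ≤ 0`, all `0 < ε < 1/2` and all `M > 1`,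
`vol{k : |Q(k)| ≤ M^j, |k-q| ≤ M^{εj}} ≤ C M^j M^{(d-2)εj}`. -/
theorem stmt6 (d m : ℕ) (hd : 3 ≤ d) (hm : 1 ≤ m) (hmd : m ≤ d - 1) :
    ∃ C : ℝ, 0 < C ∧
      ∀ (q : EuclideanSpace ℝ (Fin d)) (j : ℤ), j ≤ 0 →
        ∀ ε : ℝ, 0 < ε → ε < 1 / 2 → ∀ M : ℝ, 1 < M →
          volume {k : EuclideanSpace ℝ (Fin d) |
              |∑ i : Fin d, (if (i : ℕ) < m then (k i) ^ 2 else -((k i) ^ 2))| ≤ M ^ j ∧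
              dist k q ≤ M ^ (ε * (j : ℝ))} ≤
            ENNReal.ofReal (C * M ^ j * M ^ (((d : ℝ) - 2) * ε * (j : ℝ))) :=
  stmt6_general d m hd
end

section
/- Let Q(k₁,k₂) = k₁² − k₂² on ℝ². There is a constant C such that for all q ∈ ℝ², all integers j ≤ 0, all 0 < ε < 1/2 and all M > 1, vol{k ∈ ℝ² : |Q(k)| ≤ M^j, |k - q| ≤ M^{εj}} ≤ C · M^j · (1 + (1-2ε)|j|). -/
/-!
Slice along the second coordinate. Since `|x² - y²| = ||x| - |y|| (|x| + |y|)`, the section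
`{x | |x² - y²| ≤ δ}` lies in two intervals of length `2δ / max |y| √δ`. Integrating this over
`|y - c| ≤ r` costs `8δ` near the origin and `4δ log (1 + 2r/√δ)` on each side of it. For
`δ = M^j` and `r = M^{εj}` one has `r/√δ = M^{(1-2ε)|j|/2} ≥ 1`, so the logarithm is at most
`log 3 + (1 - 2ε)|j| log M / 2`.
-/

open MeasureTheory Set Real

lemma abs_abs_sub_abs_le_div_max {x y δ : ℝ} (hδ : 0 < δ) (h : |x ^ 2 - y ^ 2| ≤ δ) :
    |(|x| - |y|)| ≤ δ / max |y| √δ := by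
  have hs : 0 < √δ := sqrt_pos.mpr hδ
  have hfac : |x ^ 2 - y ^ 2| = |(|x| - |y|)| * (|x| + |y|) := by
    rw [← sq_abs x, ← sq_abs y, sq_sub_sq, abs_mul, abs_of_nonneg (by positivity : 0 ≤ |x| + |y|)]
    ring
  rw [le_div_iff₀ (hs.trans_le (le_max_right _ _))]
  rcases le_total (|y|) √δ with hy | hy
  · rw [max_eq_right hy]
    rcases le_total (|x|) (|y|) with hxy | hxy
    · rw [abs_of_nonpos (by linarith)]
      nlinarith [abs_nonneg x, sq_sqrt hδ.le]
    · have hd : |(|x| - |y|)| ≤ √δ := by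
        refine abs_le_sqrt ?_
        rw [abs_of_nonneg (sub_nonneg.mpr hxy)] at hfac
        nlinarith [abs_nonneg y]
      nlinarith [abs_nonneg (|x| - |y|), sq_sqrt hδ.le]
  · rw [max_eq_left hy]
    nlinarith [abs_nonneg (|x| - |y|), abs_nonneg x]

lemma volume_setOf_abs_abs_sub_le (a : ℝ) {t : ℝ} (ht : 0 ≤ t) :
    volume {x : ℝ | |(|x| - a)| ≤ t} ≤ ENNReal.ofReal (4 * t) := by
  have hsub : {x : ℝ | |(|x| - a)| ≤ t} ⊆ Metric.closedBall a t ∪ Metric.closedBall (-a) t := by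
    intro x (hx : |(|x| - a)| ≤ t)
    simp only [mem_union, Metric.mem_closedBall, Real.dist_eq]
    rcases le_total 0 x with h | h
    · left; rwa [abs_of_nonneg h] at hx
    · right; rw [abs_of_nonpos h] at hx; rw [sub_neg_eq_add, ← abs_neg]; convert hx using 2; ring
  calc volume {x : ℝ | |(|x| - a)| ≤ t}
      ≤ volume (Metric.closedBall a t) + volume (Metric.closedBall (-a) t) :=
        (measure_mono hsub).trans (measure_union_le _ _)
    _ = ENNReal.ofReal (4 * t) := by
        rw [Real.volume_closedBall, Real.volume_closedBall, ← ENNReal.ofReal_add (by positivity)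
          (by positivity)]
        ring_nf

lemma volume_setOf_abs_sq_sub_sq_le {δ : ℝ} (hδ : 0 < δ) (y : ℝ) :
    volume {x : ℝ | |x ^ 2 - y ^ 2| ≤ δ} ≤ ENNReal.ofReal (4 * δ / max |y| √δ) := by
  rw [mul_div_assoc]
  refine (measure_mono fun x hx => ?_).trans
    (volume_setOf_abs_abs_sub_le |y| (by positivity : 0 ≤ δ / max |y| √δ))
  exact abs_abs_sub_abs_le_div_max hδ hx

lemma setLIntegral_Icc_inv_eq_log {a b : ℝ} (ha : 0 < a) (hab : a ≤ b) :
    ∫⁻ y in Icc a b, ENNReal.ofReal y⁻¹ = ENNReal.ofReal (log (b / a)) := by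
  have hpos : ∀ y ∈ Icc a b, 0 < y := fun y hy => ha.trans_le hy.1
  rw [← ofReal_integral_eq_lintegral_ofReal, integral_Icc_eq_integral_Ioc,
    ← intervalIntegral.integral_of_le hab, integral_inv_of_pos ha (ha.trans_le hab)]
  · exact (continuousOn_inv₀.mono fun y hy => (hpos y hy).ne').integrableOn_Icc
  · filter_upwards [ae_restrict_mem measurableSet_Icc] with y hy
    exact inv_nonneg.mpr (hpos y hy).le

lemma setLIntegral_Icc_neg_of_even {g : ℝ → ENNReal} (hg : ∀ y, g (-y) = g y) (a b : ℝ) :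
    ∫⁻ y in Icc (-b) (-a), g y = ∫⁻ y in Icc a b, g y := by
  rw [← image_neg_Icc, ← (Measure.measurePreserving_neg volume).setLIntegral_comp_emb
    (Homeomorph.neg ℝ).measurableEmbedding]
  simp_rw [hg]

lemma setLIntegral_inv_max_abs_Icc_le {s : ℝ} (hs : 0 < s) (c r : ℝ) :
    ∫⁻ y in Icc (max s (c - r)) (c + r), ENNReal.ofReal (max |y| s)⁻¹ ≤
      ENNReal.ofReal (log (1 + 2 * r / s)) := by
  set a := max s (c - r)
  have ha : 0 < a := hs.trans_le (le_max_left _ _)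
  rcases lt_or_ge (c + r) a with hempty | hab
  · simp [Icc_eq_empty_of_lt hempty]
  have hr : 0 ≤ r := by linarith [le_max_right s (c - r)]
  calc ∫⁻ y in Icc a (c + r), ENNReal.ofReal (max |y| s)⁻¹
      = ∫⁻ y in Icc a (c + r), ENNReal.ofReal y⁻¹ := by
        refine setLIntegral_congr_fun measurableSet_Icc fun y hy => ?_
        have hy : s ≤ y := (le_max_left _ _).trans hy.1
        rw [abs_of_pos (hs.trans_le hy), max_eq_left hy]
    _ = ENNReal.ofReal (log ((c + r) / a)) := setLIntegral_Icc_inv_eq_log ha hab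
    _ ≤ ENNReal.ofReal (log (1 + 2 * r / s)) := by
        refine ENNReal.ofReal_le_ofReal (log_le_log (div_pos (ha.trans_le hab) ha) ?_)
        calc (c + r) / a ≤ 1 + 2 * r / a := by
              rw [one_add_div ha.ne']
              exact div_le_div_of_nonneg_right (by linarith [le_max_right s (c - r)]) ha.le
          _ ≤ 1 + 2 * r / s := by gcongr; exact le_max_left _ _

lemma setLIntegral_inv_max_abs_le {s r : ℝ} (hs : 0 < s) (hr : 0 ≤ r) (c : ℝ) :
    ∫⁻ y in Icc (c - r) (c + r), ENNReal.ofReal (max |y| s)⁻¹ ≤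
      ENNReal.ofReal (2 * (1 + log (1 + 2 * r / s))) := by
  set g : ℝ → ENNReal := fun y => ENNReal.ofReal (max |y| s)⁻¹
  have hL : 0 ≤ log (1 + 2 * r / s) := log_nonneg (le_add_of_nonneg_right (by positivity))
  have hsplit : Icc (c - r) (c + r) ⊆
      Icc (-s) s ∪ Icc (max s (c - r)) (c + r) ∪ Icc (c - r) (min (-s) (c + r)) := by
    intro y ⟨h₁, h₂⟩
    rcases le_total y (-s) with hy | hy
    · exact Or.inr ⟨h₁, le_min hy h₂⟩
    rcases le_total y s with hy' | hy'
    · exact Or.inl (Or.inl ⟨hy, hy'⟩)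
    · exact Or.inl (Or.inr ⟨max_le hy' h₁, h₂⟩)
  have hcentre : ∫⁻ y in Icc (-s) s, g y ≤ ENNReal.ofReal 2 := by
    calc ∫⁻ y in Icc (-s) s, g y ≤ ∫⁻ _ in Icc (-s) s, ENNReal.ofReal s⁻¹ :=
          lintegral_mono fun y => ENNReal.ofReal_le_ofReal (inv_anti₀ hs (le_max_right _ _))
      _ = ENNReal.ofReal 2 := by
          rw [setLIntegral_const, Real.volume_Icc, ← ENNReal.ofReal_mul (by positivity)]
          congr 1; field_simp; ring
  have hneg : ∫⁻ y in Icc (c - r) (min (-s) (c + r)), g y =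
      ∫⁻ y in Icc (max s (-c - r)) (-c + r), g y := by
    rw [← setLIntegral_Icc_neg_of_even (fun y => by simp [g, abs_neg]), ← max_neg_neg, neg_neg, neg_add', neg_sub, neg_add_eq_sub]
  calc ∫⁻ y in Icc (c - r) (c + r), g y
      ≤ (∫⁻ y in Icc (-s) s, g y) + (∫⁻ y in Icc (max s (c - r)) (c + r), g y)
          + ∫⁻ y in Icc (c - r) (min (-s) (c + r)), g y :=
        (lintegral_mono_set hsplit).trans <| (lintegral_union_le _ _ _).trans <|
          add_le_add (lintegral_union_le _ _ _) le_rfl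
    _ ≤ ENNReal.ofReal 2 + ENNReal.ofReal (log (1 + 2 * r / s))
          + ENNReal.ofReal (log (1 + 2 * r / s)) := by
        rw [hneg]
        gcongr
        · exact setLIntegral_inv_max_abs_Icc_le hs c r
        · exact setLIntegral_inv_max_abs_Icc_le hs (-c) r
    _ = ENNReal.ofReal (2 * (1 + log (1 + 2 * r / s))) := by
        rw [← ENNReal.ofReal_add (by norm_num) hL, ← ENNReal.ofReal_add (by positivity) hL]
        ring_nf

theorem volume_setOf_abs_sq_sub_sq_le_and_abs_sub_le {δ r : ℝ} (hδ : 0 < δ) (hr : 0 ≤ r)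
    (c : ℝ) :
    volume {p : ℝ × ℝ | |p.1 ^ 2 - p.2 ^ 2| ≤ δ ∧ |p.2 - c| ≤ r} ≤
      ENNReal.ofReal (8 * δ * (1 + log (1 + 2 * r / √δ))) := by
  set T := {p : ℝ × ℝ | |p.1 ^ 2 - p.2 ^ 2| ≤ δ ∧ |p.2 - c| ≤ r}
  have hT : MeasurableSet T :=
    (measurableSet_le (f := fun p : ℝ × ℝ => |p.1 ^ 2 - p.2 ^ 2|) (by fun_prop)
      measurable_const).inter
    (measurableSet_le (f := fun p : ℝ × ℝ => |p.2 - c|) (by fun_prop) measurable_const)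
  have hslice : ∀ y, volume ((fun x => (x, y)) ⁻¹' T) ≤
      (Icc (c - r) (c + r)).indicator
        (fun y => ENNReal.ofReal (4 * δ) * ENNReal.ofReal (max |y| √δ)⁻¹) y := by
    intro y
    by_cases hy : y ∈ Icc (c - r) (c + r)
    · rw [indicator_of_mem hy, ← ENNReal.ofReal_mul (by positivity), ← div_eq_mul_inv]
      exact (measure_mono fun x hx => hx.1).trans (volume_setOf_abs_sq_sub_sq_le hδ y)
    · have : (fun x => (x, y)) ⁻¹' T = ∅ :=
        eq_empty_of_forall_notMem fun x hx => hy <| by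
          obtain ⟨h₁, h₂⟩ := abs_le.mp hx.2
          constructor <;> linarith
      simp [this]
  rw [Measure.volume_eq_prod, Measure.prod_apply_symm hT]
  calc ∫⁻ y, volume ((fun x => (x, y)) ⁻¹' T)
      ≤ ENNReal.ofReal (4 * δ) * ∫⁻ y in Icc (c - r) (c + r), ENNReal.ofReal (max |y| √δ)⁻¹ := by
        rw [← lintegral_const_mul' _ _ ENNReal.ofReal_ne_top,
          ← lintegral_indicator measurableSet_Icc]
        exact lintegral_mono hslice
    _ ≤ ENNReal.ofReal (4 * δ) * ENNReal.ofReal (2 * (1 + log (1 + 2 * r / √δ))) := by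
        gcongr
        exact setLIntegral_inv_max_abs_le (sqrt_pos.mpr hδ) hr c
    _ = ENNReal.ofReal (8 * δ * (1 + log (1 + 2 * r / √δ))) := by
        rw [← ENNReal.ofReal_mul (by positivity)]
        ring_nf

lemma EuclideanSpace.volume_setOf_fin_two_mem (S : Set (ℝ × ℝ)) :
    volume {k : EuclideanSpace ℝ (Fin 2) | (k 0, k 1) ∈ S} = volume S :=
  ((volume_preserving_finTwoArrow ℝ).comp
    (EuclideanSpace.volume_preserving_symm_measurableEquiv_toLp (Fin 2))).measure_preimage_equiv
    (f := (MeasurableEquiv.toLp 2 (Fin 2 → ℝ)).symm.trans MeasurableEquiv.finTwoArrow) S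

lemma log_one_add_two_mul_le {t : ℝ} (ht : 1 ≤ t) : log (1 + 2 * t) ≤ log 3 + log t := by
  rw [← log_mul (by norm_num) (by positivity)]
  exact log_le_log (by positivity) (by linarith)

/-- For `Q(k₁,k₂) = k₁² − k₂²` on `ℝ²` and fixed `M > 1`, there is a
constant `C` such that for all `q ∈ ℝ²`, integers `j ≤ 0` and `0 < ε < 1/2`,
`vol{k : |Q(k)| ≤ M^j, |k-q| ≤ M^{εj}} ≤ C M^j (1 + (1-2ε)|j|)`. -/
theorem stmt7 (M : ℝ) (hM : 1 < M) :
    ∃ C : ℝ, 0 < C ∧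
      ∀ (q : EuclideanSpace ℝ (Fin 2)) (j : ℤ), j ≤ 0 →
        ∀ ε : ℝ, 0 < ε → ε < 1 / 2 →
          volume {k : EuclideanSpace ℝ (Fin 2) |
              |(k 0) ^ 2 - (k 1) ^ 2| ≤ M ^ j ∧ dist k q ≤ M ^ (ε * (j : ℝ))} ≤
            ENNReal.ofReal (C * M ^ j * (1 + (1 - 2 * ε) * |(j : ℝ)|)) := by
  have hM0 : 0 < M := by linarith
  have hlogM : 0 < log M := log_pos hM
  refine ⟨8 * (1 + log 3 + log M), by positivity, fun q j hj ε _ hε2 => ?_⟩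
  set X := (1 - 2 * ε) * |(j : ℝ)|
  have hX : 0 ≤ X := mul_nonneg (by linarith) (abs_nonneg _)
  have hδ : 0 < M ^ j := zpow_pos hM0 j
  have hratio : M ^ (ε * (j : ℝ)) / √(M ^ j) = M ^ (X / 2) := by
    have hj' : |(j : ℝ)| = -j := abs_of_nonpos (by exact_mod_cast hj)
    rw [sqrt_eq_rpow, ← rpow_intCast, ← rpow_mul hM0.le, ← rpow_sub hM0]
    simp only [X, hj']
    ring_nf
  have hlog : log (1 + 2 * (M ^ (ε * (j : ℝ)) / √(M ^ j))) ≤ log 3 + X / 2 * log M := by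
    rw [hratio, ← log_rpow hM0]
    exact log_one_add_two_mul_le (one_le_rpow hM.le (by positivity))
  calc volume {k : EuclideanSpace ℝ (Fin 2) |
          |(k 0) ^ 2 - (k 1) ^ 2| ≤ M ^ j ∧ dist k q ≤ M ^ (ε * (j : ℝ))}
      ≤ volume {p : ℝ × ℝ | |p.1 ^ 2 - p.2 ^ 2| ≤ M ^ j ∧ |p.2 - q 1| ≤ M ^ (ε * (j : ℝ))} := by
        rw [← EuclideanSpace.volume_setOf_fin_two_mem]
        exact measure_mono fun k hk => ⟨hk.1, (PiLp.dist_apply_le k q 1).trans hk.2⟩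
    _ ≤ ENNReal.ofReal (8 * M ^ j * (1 + log (1 + 2 * M ^ (ε * (j : ℝ)) / √(M ^ j)))) :=
        volume_setOf_abs_sq_sub_sq_le_and_abs_sub_le hδ (by positivity) (q 1)
    _ ≤ ENNReal.ofReal (8 * (1 + log 3 + log M) * M ^ j * (1 + X)) := by
        rw [mul_div_assoc]
        refine ENNReal.ofReal_le_ofReal ?_
        nlinarith [mul_nonneg hδ.le hX, mul_nonneg (mul_nonneg hδ.le hX) hlogM.le,
          mul_nonneg (mul_nonneg hδ.le hX) (log_nonneg (by norm_num : (1 : ℝ) ≤ 3))]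
end

section
/- Let a, b be nonzero unit vectors in ℝ^d, let P : ℝ^d → ℝ^m be the orthogonal projection onto the first m coordinates, and suppose Pa ≠ 0 and Pb ≠ 0. If |a − b| ≤ 2β and |Pb| ≥ c > 0, then sin θ(Pa, Pb) ≤ 2β/c, where θ(u,v) denotes the angle between vectors u and v. -/
/-! The coordinate projection is `1`-Lipschitz, so `‖Pa - Pb‖ ≤ ‖a - b‖ ≤ 2β`. On the other hand
`‖v‖ sin θ(u, v)` is the distance from `v` to the line `ℝ u`, hence at most `‖u - v‖`; with
`u = Pa`, `v = Pb` and `‖Pb‖ ≥ c` this gives `c sin θ(Pa, Pb) ≤ 2β`. -/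

open InnerProductGeometry Real
open scoped RealInnerProductSpace

theorem EuclideanSpace.norm_le_of_apply_eq_comp {ι κ : Type*} [Fintype ι] [Fintype κ]
    {e : ι → κ} (he : Function.Injective e) {x : EuclideanSpace ℝ κ}
    {y : EuclideanSpace ℝ ι} (h : ∀ i, y i = x (e i)) : ‖y‖ ≤ ‖x‖ := by
  classical
  rw [EuclideanSpace.norm_eq, EuclideanSpace.norm_eq]
  refine Real.sqrt_le_sqrt ?_
  calc ∑ i, ‖y i‖ ^ 2 = ∑ j ∈ Finset.univ.image e, ‖x j‖ ^ 2 := by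
        rw [Finset.sum_image he.injOn]; simp only [h]
    _ ≤ ∑ j, ‖x j‖ ^ 2 :=
        Finset.sum_le_sum_of_subset_of_nonneg (Finset.subset_univ _) fun _ _ _ => by positivity

theorem InnerProductGeometry.sin_angle_mul_norm_le_norm_sub {V : Type*} [NormedAddCommGroup V]
    [InnerProductSpace ℝ V] (u v : V) : sin (angle u v) * ‖v‖ ≤ ‖u - v‖ := by
  rcases eq_or_ne u 0 with rfl | hu
  · simp
  have hu' : 0 < ‖u‖ := norm_pos_iff.2 hu
  -- `‖u‖²‖u - v‖² - (‖u‖²‖v‖² - ⟪u, v⟫²) = (‖u‖² - ⟪u, v⟫)²`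
  have hsq : (sin (angle u v) * ‖u‖ * ‖v‖) ^ 2 ≤ (‖u - v‖ * ‖u‖) ^ 2 := by
    rw [mul_assoc, sin_angle_mul_norm_mul_norm,
      sq_sqrt (by nlinarith [real_inner_mul_inner_self_le u v]), mul_pow, norm_sub_sq_real,
      real_inner_self_eq_norm_sq, real_inner_self_eq_norm_sq]
    nlinarith [sq_nonneg (‖u‖ ^ 2 - ⟪u, v⟫)]
  have hle := (pow_le_pow_iff_left₀
    (mul_nonneg (mul_nonneg (sin_angle_nonneg u v) hu'.le) (norm_nonneg v)) (by positivity)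
    two_ne_zero).1 hsq
  exact le_of_mul_le_mul_right (by linarith) hu'

theorem stmt10_general (d m : ℕ) (hmd : m < d)
    (a b : EuclideanSpace ℝ (Fin d))
    (P : EuclideanSpace ℝ (Fin d) → EuclideanSpace ℝ (Fin m))
    (hP : ∀ (v : EuclideanSpace ℝ (Fin d)) (i : Fin m), P v i = v (Fin.castLE hmd.le i))
    (c β : ℝ) (hc : 0 < c)
    (hdist : ‖a - b‖ ≤ 2 * β) (hPbc : c ≤ ‖P b‖) :
    Real.sin (InnerProductGeometry.angle (P a) (P b)) ≤ 2 * β / c := by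
  have hproj : ‖P a - P b‖ ≤ ‖a - b‖ :=
    EuclideanSpace.norm_le_of_apply_eq_comp (Fin.castLE_injective hmd.le) fun i => by
      simp only [PiLp.sub_apply, hP]
  rw [le_div_iff₀ hc]
  calc sin (angle (P a) (P b)) * c ≤ sin (angle (P a) (P b)) * ‖P b‖ :=
        mul_le_mul_of_nonneg_left hPbc (sin_angle_nonneg _ _)
    _ ≤ ‖P a - P b‖ := sin_angle_mul_norm_le_norm_sub _ _
    _ ≤ 2 * β := hproj.trans hdist

/-- Let `a, b` be unit vectors in `ℝ^d`, `P` the orthogonal projection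
onto the first `m` coordinates, with `Pa ≠ 0`, `Pb ≠ 0`.  If `|a - b| ≤ 2β` and
`|Pb| ≥ c > 0`, then `sin θ(Pa, Pb) ≤ 2β/c`. -/
theorem stmt10 (d m : ℕ) (hm : 1 ≤ m) (hmd : m < d)
    (a b : EuclideanSpace ℝ (Fin d)) (ha : ‖a‖ = 1) (hb : ‖b‖ = 1)
    (P : EuclideanSpace ℝ (Fin d) → EuclideanSpace ℝ (Fin m))
    (hP : ∀ (v : EuclideanSpace ℝ (Fin d)) (i : Fin m), P v i = v (Fin.castLE hmd.le i))
    (hPa : P a ≠ 0) (hPb : P b ≠ 0)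
    (c β : ℝ) (hc : 0 < c) (hβ : 0 < β)
    (hdist : ‖a - b‖ ≤ 2 * β) (hPbc : c ≤ ‖P b‖) :
    Real.sin (InnerProductGeometry.angle (P a) (P b)) ≤ 2 * β / c :=
  stmt10_general d m hmd a b P hP c β hc hdist hPbc
end

section
/- Let d ≥ 3, 1 ≤ m ≤ d−1, and let F be the truncated cone {(rθ₁, rθ₂) : 0 ≤ r ≤ 1, θ₁ ∈ S^{m-1}, θ₂ ∈ S^{d-m-1}} ⊆ ℝ^d, i.e. the zero set of Q(k) = k₁²+⋯+k_m² − k_{m+1}²−⋯−k_d² intersected with the ball of radius √2. Fix ω = (rθ₁, rθ₂) ∈ F with r > 0, and let D(ω) = {(tθ₁, tθ₂) : 0 < |t| ≤ 1}. Then there is a constant c (depending only on d, m) such that for all β > 0, the (d−1)-dimensional Hausdorff measure of U_β(D(ω)) ∩ F is at most c·β^{d−2}, where U_β(A) is the open β-neighbourhood of A. -/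
/-!
Solving `Q k = 0` for a coordinate `k j` with `j < m` writes the cone as the union of the graphs
`k j = ± √(T_j k')`, where `k'` is `k` with the `j`-th coordinate removed and `T_j` is a quadratic
form in `k'`. Choosing `j` with `k j ^ 2` maximal among the first `m` coordinates puts `k'` in the
region `‖k'‖ ^ 2 ≤ 2 m T_j k'`, on which `√T_j` is `√(2m)`-Lipschitz, so the cone is covered by
finitely many Lipschitz images of subsets of `ℝ^(d-1)`, and the `(d-1)`-dimensional Hausdorff measure of
each image is controlled by the Lebesgue measure of its parameter set. Removing a coordinate is
`1`-Lipschitz, so the parameters of the points within `β` of `D(ω)` lie within `β` of a segment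
of length `2√2`, a set covered by `O(1/β)` balls of radius `2β`, of measure `O(β^(d-2))`.
-/

open MeasureTheory Metric Set Module
open scoped ENNReal NNReal

lemma lipschitzOnWith_sqrt_of_sq_norm_le {E : Type*} [SeminormedAddCommGroup E] {T : E → ℝ}
    {C : ℝ≥0} (hC : 0 < C) (hT : ∀ q q', |T q - T q'| ≤ ‖q - q'‖ * (‖q‖ + ‖q'‖)) :
    LipschitzOnWith (NNReal.sqrt C) (fun q => √(T q)) {q | ‖q‖ ^ 2 ≤ C * T q} := by
  refine LipschitzOnWith.of_dist_le_mul fun q hq q' hq' => ?_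
  have hT0 : ∀ {q}, ‖q‖ ^ 2 ≤ C * T q → 0 ≤ T q := fun h =>
    nonneg_of_mul_nonneg_right ((sq_nonneg _).trans h) (NNReal.coe_pos.2 hC)
  have hnorm : ∀ {q}, ‖q‖ ^ 2 ≤ C * T q → ‖q‖ ≤ √C * √(T q) := fun h => by
    rw [← Real.sqrt_mul C.coe_nonneg, ← Real.sqrt_sq (norm_nonneg _)]
    exact Real.sqrt_le_sqrt h
  rw [Real.dist_eq, dist_eq_norm, Real.coe_sqrt]
  rcases (add_nonneg (Real.sqrt_nonneg (T q)) (Real.sqrt_nonneg (T q'))).eq_or_lt with h0 | hpos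
  · have ha : √(T q) = 0 := by linarith [Real.sqrt_nonneg (T q), Real.sqrt_nonneg (T q')]
    have hb : √(T q') = 0 := by linarith [Real.sqrt_nonneg (T q), Real.sqrt_nonneg (T q')]
    simp only [ha, hb, sub_zero, abs_zero]
    positivity
  refine le_of_mul_le_mul_right ?_ hpos
  calc |√(T q) - √(T q')| * (√(T q) + √(T q')) = |T q - T q'| := by
        rw [← abs_of_pos hpos, ← abs_mul]
        congr 1
        linear_combination Real.sq_sqrt (hT0 hq) - Real.sq_sqrt (hT0 hq')
    _ ≤ ‖q - q'‖ * (‖q‖ + ‖q'‖) := hT q q'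
    _ ≤ ‖q - q'‖ * (√C * (√(T q) + √(T q'))) := by
        gcongr; linarith [hnorm hq, hnorm hq']
    _ = √C * ‖q - q'‖ * (√(T q) + √(T q')) := by ring

lemma abs_sum_mul_sq_sub_sum_mul_sq_le {ι : Type*} [Fintype ι] {ε : ι → ℝ}
    (hε : ∀ i, |ε i| ≤ 1) (x y : EuclideanSpace ℝ ι) :
    |∑ i, ε i * x i ^ 2 - ∑ i, ε i * y i ^ 2| ≤ ‖x - y‖ * ‖x + y‖ := by
  rw [← Finset.sum_sub_distrib]
  calc _ ≤ ∑ i, |ε i * x i ^ 2 - ε i * y i ^ 2| := Finset.abs_sum_le_sum_abs _ _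
    _ ≤ ∑ i, ‖(x - y) i‖ * ‖(x + y) i‖ := Finset.sum_le_sum fun i _ => by
        rw [show ε i * x i ^ 2 - ε i * y i ^ 2 = ε i * ((x - y) i * (x + y) i) by simp; ring,
          abs_mul, abs_mul]
        exact mul_le_of_le_one_left (by positivity) (hε i)
    _ ≤ √(∑ i, ‖(x - y) i‖ ^ 2) * √(∑ i, ‖(x + y) i‖ ^ 2) :=
        Real.sum_mul_le_sqrt_mul_sqrt _ _ _
    _ = ‖x - y‖ * ‖x + y‖ := by rw [EuclideanSpace.norm_eq, EuclideanSpace.norm_eq]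

lemma hausdorffMeasure_le_of_subset_iUnion_image {X Y ι : Type*} [EMetricSpace X]
    [MeasurableSpace X] [BorelSpace X] [EMetricSpace Y] [MeasurableSpace Y] [BorelSpace Y]
    [Fintype ι] {d : ℝ} (hd : 0 ≤ d)
    {K : ℝ≥0} {f : ι → X → Y} {s : ι → Set X} (hf : ∀ i, LipschitzOnWith K (f i) (s i))
    {A : Set Y} (hA : A ⊆ ⋃ i, f i '' s i) {B : ℝ≥0∞} (hB : ∀ i, μH[d] (s i) ≤ B) :
    μH[d] A ≤ Fintype.card ι * ((K : ℝ≥0∞) ^ d * B) :=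
  calc μH[d] A ≤ ∑ i, μH[d] (f i '' s i) :=
        (measure_mono hA).trans (measure_iUnion_fintype_le _ _)
    _ ≤ ∑ _i : ι, (K : ℝ≥0∞) ^ d * B := Finset.sum_le_sum fun i _ =>
        ((hf i).hausdorffMeasure_image_le hd).trans (by gcongr; exact hB i)
    _ = _ := by rw [Finset.sum_const, nsmul_eq_mul, Finset.card_univ]

lemma LipschitzWith.mapsTo_thickening {X Y : Type*} [PseudoMetricSpace X] [PseudoMetricSpace Y]
    {f : X → Y} (hf : LipschitzWith 1 f) (δ : ℝ) (s : Set X) :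
    MapsTo f (thickening δ s) (thickening δ (f '' s)) := fun x hx => by
  obtain ⟨z, hz, hxz⟩ := mem_thickening_iff.1 hx
  refine mem_thickening_iff.2 ⟨f z, mem_image_of_mem f hz, ?_⟩
  simpa using (hf.dist_le_mul x z).trans_lt (by simpa using hxz)

lemma smul_mem_image_smul_Icc {E : Type*} [NormedAddCommGroup E] [NormedSpace ℝ E] {ω : E}
    (hω : ω ≠ 0) {t R : ℝ} (h : ‖t • ω‖ ≤ R) :
    t • ω ∈ (· • (‖ω‖⁻¹ • ω)) '' Icc (-R) R := by
  refine ⟨t * ‖ω‖, abs_le.1 ?_, ?_⟩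
  · rwa [abs_mul, abs_norm, ← Real.norm_eq_abs, ← norm_smul]
  · simp [smul_smul, norm_ne_zero_iff.2 hω]

section Tube

variable {E : Type*} [NormedAddCommGroup E] [NormedSpace ℝ E]

lemma thickening_smul_Icc_subset_iUnion_ball {u : E} (hu : ‖u‖ ≤ 1) {R β : ℝ} (hβ : 0 < β) :
    thickening β ((· • u) '' Icc (-R) R) ⊆
      ⋃ k ∈ Finset.Icc (-⌈R / β⌉₊ : ℤ) ⌈R / β⌉₊, ball (((k : ℝ) * β) • u) (2 * β) := by
  rintro x hx
  obtain ⟨_, ⟨s, hs, rfl⟩, hxs⟩ := mem_thickening_iff.1 hx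
  have hfloor := Int.floor_le (s / β)
  have hfloor' := Int.lt_floor_add_one (s / β)
  have hRβ : R / β ≤ ⌈R / β⌉₊ := Nat.le_ceil _
  have hsβ : |s / β| ≤ R / β := by
    rw [abs_div, abs_of_pos hβ]
    gcongr
    exact abs_le.2 hs
  obtain ⟨hlo, hhi⟩ := abs_le.1 hsβ
  refine mem_biUnion (x := ⌊s / β⌋) ?_ ?_
  · rw [Finset.mem_coe, Finset.mem_Icc, Int.le_floor, ← Int.cast_le (R := ℝ)]
    push_cast
    constructor <;> linarith
  · have hstep : |s - ⌊s / β⌋ * β| < β := by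
      rw [abs_lt]
      constructor <;> nlinarith [div_mul_cancel₀ s hβ.ne']
    calc dist x ((⌊s / β⌋ * β) • u)
        ≤ dist x (s • u) + dist (s • u) ((⌊s / β⌋ * β) • u) := dist_triangle _ _ _
      _ < β + β := by
          gcongr
          rw [dist_eq_norm, ← sub_smul, norm_smul, Real.norm_eq_abs]
          exact (mul_le_of_le_one_right (abs_nonneg _) hu).trans_lt hstep
      _ = 2 * β := by ring

variable [MeasurableSpace E] [BorelSpace E] [FiniteDimensional ℝ E] [Nontrivial E]

lemma exists_addHaar_inter_thickening_smul_Icc_le (μ : Measure E) [μ.IsAddHaarMeasure]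
    {R : ℝ} (hR : 0 ≤ R) :
    ∃ C > 0, ∀ u : E, ‖u‖ ≤ 1 → ∀ β > 0,
      μ (closedBall 0 R ∩ thickening β ((· • u) '' Icc (-R) R)) ≤
        ENNReal.ofReal (C * β ^ (finrank ℝ E - 1)) := by
  set n := finrank ℝ E
  have hn : 0 < n := finrank_pos
  set v := μ.real (ball 0 1)
  have hv : μ (ball (0 : E) 1) = ENNReal.ofReal v :=
    (ofReal_measureReal measure_ball_lt_top.ne).symm
  have hv0 : 0 < v := ENNReal.toReal_pos (measure_ball_pos μ 0 one_pos).ne' measure_ball_lt_top.ne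
  refine ⟨(2 * R + 3) * 2 ^ n * v + R ^ n * v, by positivity, fun u hu β hβ => ?_⟩
  rcases le_or_gt 1 β with hβ1 | hβ1
  · calc μ (closedBall 0 R ∩ _) ≤ μ (closedBall 0 R) := measure_mono inter_subset_left
      _ = ENNReal.ofReal (R ^ n * v) := by
          rw [Measure.addHaar_closedBall μ _ hR, hv, ENNReal.ofReal_mul (by positivity)]
      _ ≤ _ := ENNReal.ofReal_le_ofReal <| calc
          R ^ n * v ≤ R ^ n * v * β ^ (n - 1) :=
            le_mul_of_one_le_right (by positivity) (one_le_pow₀ hβ1)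
          _ ≤ _ := by gcongr; exact le_add_of_nonneg_left (by positivity)
  set N := ⌈R / β⌉₊
  have hN : N * β < R + β := by
    have := Nat.ceil_lt_add_one (div_nonneg hR hβ.le)
    calc (N : ℝ) * β < (R / β + 1) * β := by gcongr
      _ = R + β := by field_simp
  have hpow : (2 * β) ^ n = 2 ^ n * β * β ^ (n - 1) := by
    rw [mul_pow, mul_assoc, ← pow_succ', Nat.sub_add_cancel hn]
  calc μ (closedBall 0 R ∩ _)
      ≤ μ (⋃ k ∈ Finset.Icc (-N : ℤ) N, ball (((k : ℝ) * β) • u) (2 * β)) :=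
        measure_mono (inter_subset_right.trans (thickening_smul_Icc_subset_iUnion_ball hu hβ))
    _ ≤ ∑ k ∈ Finset.Icc (-N : ℤ) N, μ (ball (((k : ℝ) * β) • u) (2 * β)) :=
        measure_biUnion_finset_le _ _
    _ = ENNReal.ofReal ((2 * N + 1) * ((2 * β) ^ n * v)) := by
        simp only [Measure.addHaar_ball μ _ (by positivity : 0 ≤ 2 * β), hv, Finset.sum_const,
          Int.card_Icc, nsmul_eq_mul]
        rw [← ENNReal.ofReal_mul (by positivity), ← ENNReal.ofReal_natCast,
          ← ENNReal.ofReal_mul (by positivity), show ((N : ℤ) + 1 - -N).toNat = 2 * N + 1 by omega]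
        push_cast
        rfl
    _ ≤ _ := ENNReal.ofReal_le_ofReal <| calc
        (2 * N + 1) * ((2 * β) ^ n * v) = ((2 * N + 1) * β) * (2 ^ n * v * β ^ (n - 1)) := by
          rw [hpow]; ring
        _ ≤ (2 * R + 3) * (2 ^ n * v * β ^ (n - 1)) := by gcongr; linarith
        _ ≤ _ := by nlinarith [show 0 ≤ R ^ n * v * β ^ (n - 1) by positivity]

end Tube

namespace EuclideanSpace

variable {n : ℕ}

def insertCoord (j : Fin (n + 1)) (a : ℝ) (q : EuclideanSpace ℝ (Fin n)) :
    EuclideanSpace ℝ (Fin (n + 1)) :=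
  WithLp.toLp 2 (j.insertNth a q)

def removeCoord (j : Fin (n + 1)) (x : EuclideanSpace ℝ (Fin (n + 1))) :
    EuclideanSpace ℝ (Fin n) :=
  WithLp.toLp 2 (j.removeNth x)

variable (j : Fin (n + 1))

@[simp] lemma insertCoord_apply_same (a : ℝ) (q : EuclideanSpace ℝ (Fin n)) :
    insertCoord j a q j = a := by simp [insertCoord]

@[simp] lemma insertCoord_apply_succAbove (a : ℝ) (q : EuclideanSpace ℝ (Fin n)) (i : Fin n) :
    insertCoord j a q (j.succAbove i) = q i := by simp [insertCoord]

@[simp] lemma removeCoord_apply (x : EuclideanSpace ℝ (Fin (n + 1))) (i : Fin n) :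
    removeCoord j x i = x (j.succAbove i) := rfl

@[simp] lemma removeCoord_insertCoord (a : ℝ) (q : EuclideanSpace ℝ (Fin n)) :
    removeCoord j (insertCoord j a q) = q := by
  simp [removeCoord, insertCoord]

lemma insertCoord_removeCoord (x : EuclideanSpace ℝ (Fin (n + 1))) :
    insertCoord j (x j) (removeCoord j x) = x :=
  congrArg (WithLp.toLp 2) (Fin.insertNth_self_removeNth j x)

lemma insertCoord_sub (a b : ℝ) (q q' : EuclideanSpace ℝ (Fin n)) :
    insertCoord j a q - insertCoord j b q' = insertCoord j (a - b) (q - q') := by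
  ext i; induction i using j.succAboveCases <;> simp

lemma removeCoord_sub (x y : EuclideanSpace ℝ (Fin (n + 1))) :
    removeCoord j (x - y) = removeCoord j x - removeCoord j y := rfl

lemma removeCoord_smul (t : ℝ) (x : EuclideanSpace ℝ (Fin (n + 1))) :
    removeCoord j (t • x) = t • removeCoord j x := rfl

lemma norm_insertCoord_sq (a : ℝ) (q : EuclideanSpace ℝ (Fin n)) :
    ‖insertCoord j a q‖ ^ 2 = a ^ 2 + ‖q‖ ^ 2 := by
  simp [EuclideanSpace.norm_sq_eq, Fin.sum_univ_succAbove _ j]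

lemma norm_insertCoord_le (a : ℝ) (q : EuclideanSpace ℝ (Fin n)) :
    ‖insertCoord j a q‖ ≤ |a| + ‖q‖ := by
  refine (pow_le_pow_iff_left₀ (norm_nonneg _) (by positivity) two_ne_zero).1 ?_
  rw [norm_insertCoord_sq, ← sq_abs a]
  nlinarith [abs_nonneg a, norm_nonneg q]

lemma norm_removeCoord_le (x : EuclideanSpace ℝ (Fin (n + 1))) : ‖removeCoord j x‖ ≤ ‖x‖ := by
  refine (pow_le_pow_iff_left₀ (norm_nonneg _) (norm_nonneg _) two_ne_zero).1 ?_
  conv_rhs => rw [← insertCoord_removeCoord j x, norm_insertCoord_sq]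
  nlinarith [sq_nonneg (x j)]

lemma lipschitzWith_removeCoord : LipschitzWith 1 (removeCoord j) :=
  LipschitzWith.of_dist_le_mul fun x y => by
    simpa [dist_eq_norm, ← removeCoord_sub] using norm_removeCoord_le j (x - y)

lemma lipschitzOnWith_insertCoord {f : EuclideanSpace ℝ (Fin n) → ℝ} {K : ℝ≥0}
    {s : Set (EuclideanSpace ℝ (Fin n))} (hf : LipschitzOnWith K f s) :
    LipschitzOnWith (K + 1) (fun q => insertCoord j (f q) q) s :=
  LipschitzOnWith.of_dist_le_mul fun q hq q' hq' => by
    rw [dist_eq_norm, insertCoord_sub, NNReal.coe_add, NNReal.coe_one, add_mul, one_mul]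
    exact (norm_insertCoord_le j _ _).trans
      (add_le_add (hf.dist_le_mul q hq q' hq') (dist_eq_norm q q').ge)

lemma removeCoord_mem_closedBall_inter_thickening {ω x : EuclideanSpace ℝ (Fin (n + 1))}
    (hω : ω ≠ 0) {R β : ℝ} (hx : ‖x‖ ≤ R)
    (hxω : x ∈ thickening β {p | ∃ t : ℝ, ‖p‖ ≤ R ∧ p = t • ω}) :
    removeCoord j x ∈
      closedBall 0 R ∩ thickening β ((· • removeCoord j (‖ω‖⁻¹ • ω)) '' Icc (-R) R) := by
  refine ⟨mem_closedBall_zero_iff.2 ((norm_removeCoord_le j x).trans hx), ?_⟩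
  have hsegment : {p | ∃ t : ℝ, ‖p‖ ≤ R ∧ p = t • ω} ⊆ (· • (‖ω‖⁻¹ • ω)) '' Icc (-R) R := by
    rintro _ ⟨t, ht, rfl⟩
    exact smul_mem_image_smul_Icc hω ht
  have h := (lipschitzWith_removeCoord j).mapsTo_thickening β _
    (thickening_subset_of_subset β hsegment hxω)
  rwa [image_image] at h

end EuclideanSpace

namespace TruncatedCone

open EuclideanSpace

variable {n : ℕ}

def coneForm (m : ℕ) {d : ℕ} (k : EuclideanSpace ℝ (Fin d)) : ℝ :=
  ∑ i : Fin d, if (i : ℕ) < m then (k i) ^ 2 else -((k i) ^ 2)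

def coneHeightSq (m : ℕ) (j : Fin (n + 1)) (q : EuclideanSpace ℝ (Fin n)) : ℝ :=
  ∑ i, (if (j.succAbove i : ℕ) < m then -1 else 1) * q i ^ 2

def coneChart (m : ℕ) (j : Fin (n + 1)) : Set (EuclideanSpace ℝ (Fin n)) :=
  {q | ‖q‖ ^ 2 ≤ 2 * m * coneHeightSq m j q}

noncomputable def coneGraph (m : ℕ) (j : Fin (n + 1)) (σ : ℝ) (q : EuclideanSpace ℝ (Fin n)) :
    EuclideanSpace ℝ (Fin (n + 1)) :=
  insertCoord j (σ * √(coneHeightSq m j q)) q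

variable {m : ℕ} (j : Fin (n + 1))

lemma mem_coneChart {q : EuclideanSpace ℝ (Fin n)} :
    q ∈ coneChart m j ↔ ‖q‖ ^ 2 ≤ 2 * m * coneHeightSq m j q := Iff.rfl

lemma coneForm_insertCoord (hj : (j : ℕ) < m) (a : ℝ) (q : EuclideanSpace ℝ (Fin n)) :
    coneForm m (insertCoord j a q) = a ^ 2 - coneHeightSq m j q := by
  rw [coneForm, Fin.sum_univ_succAbove _ j, coneHeightSq, sub_eq_add_neg,
    ← Finset.sum_neg_distrib]
  simp only [insertCoord_apply_same, insertCoord_apply_succAbove, if_pos hj]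
  congr 1
  refine Finset.sum_congr rfl fun i _ => ?_
  split_ifs <;> ring

lemma norm_sq_add_coneForm {d : ℕ} (k : EuclideanSpace ℝ (Fin d)) :
    ‖k‖ ^ 2 + coneForm m k = 2 * ∑ i : Fin d with i.val < m, k i ^ 2 := by
  rw [EuclideanSpace.norm_sq_eq, coneForm, ← Finset.sum_add_distrib, Finset.sum_filter,
    Finset.mul_sum]
  refine Finset.sum_congr rfl fun i _ => ?_
  split_ifs <;> simp; ring

lemma abs_coneHeightSq_sub_le (q q' : EuclideanSpace ℝ (Fin n)) :
    |coneHeightSq m j q - coneHeightSq m j q'| ≤ ‖q - q'‖ * (‖q‖ + ‖q'‖) :=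
  (abs_sum_mul_sq_sub_sum_mul_sq_le (fun i => by split_ifs <;> simp) q q').trans
    (by gcongr; exact norm_add_le q q')

lemma lipschitzOnWith_coneGraph (hm : 1 ≤ m) {σ : ℝ} (hσ : |σ| ≤ 1) :
    LipschitzOnWith (NNReal.sqrt (2 * m) + 1) (coneGraph m j σ) (coneChart m j) := by
  have hsqrt := (lipschitzOnWith_sqrt_of_sq_norm_le (T := coneHeightSq m j) (C := 2 * m)
    (by positivity) (abs_coneHeightSq_sub_le j)).mono fun q (hq : q ∈ coneChart m j) => by
      simpa [mem_coneChart] using hq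
  refine lipschitzOnWith_insertCoord j
    (((lipschitzWith_smul σ).comp_lipschitzOnWith hsqrt).weaken ?_)
  calc ‖σ‖₊ * NNReal.sqrt (2 * m) ≤ 1 * NNReal.sqrt (2 * m) := by
        gcongr; rw [← NNReal.coe_le_coe]; simpa using hσ
    _ = _ := one_mul _

lemma exists_mem_coneChart_coneGraph_eq (hm : 1 ≤ m) (hmn : m ≤ n + 1)
    {k : EuclideanSpace ℝ (Fin (n + 1))} (hk : coneForm m k = 0) :
    ∃ j, removeCoord j k ∈ coneChart m j ∧
      coneGraph m j (SignType.sign (k j)) (removeCoord j k) = k := by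
  obtain ⟨j, hjm, hjmax⟩ := Finset.exists_max_image {i : Fin (n + 1) | (i : ℕ) < m}
    (fun i => k i ^ 2) ⟨⟨0, by omega⟩, by simp; omega⟩
  replace hjm : (j : ℕ) < m := by simpa using hjm
  have hheight : coneHeightSq m j (removeCoord j k) = k j ^ 2 := by
    have := coneForm_insertCoord j hjm (k j) (removeCoord j k)
    rw [insertCoord_removeCoord, hk] at this
    linarith
  have hsum : ∑ i : Fin (n + 1) with i.val < m, k i ^ 2 ≤ m * k j ^ 2 := by
    simpa [Fin.card_filter_val_lt, hmn] using Finset.sum_le_card_nsmul _ _ _ hjmax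
  refine ⟨j, ?_, ?_⟩
  · rw [mem_coneChart, hheight]
    nlinarith [norm_removeCoord_le j k, norm_sq_add_coneForm (m := m) k,
      norm_nonneg (removeCoord j k)]
  · rw [coneGraph, hheight, Real.sqrt_sq_eq_abs, sign_mul_abs, insertCoord_removeCoord]

lemma removeCoord_coneGraph (σ : ℝ) (q : EuclideanSpace ℝ (Fin n)) :
    removeCoord j (coneGraph m j σ q) = q :=
  removeCoord_insertCoord j _ q

lemma hausdorffMeasure_le_of_forall_coneForm_eq_zero (hm : 1 ≤ m) (hmn : m ≤ n + 1)
    {A : Set (EuclideanSpace ℝ (Fin (n + 1)))} (hA : ∀ k ∈ A, coneForm m k = 0) {B : ℝ≥0∞}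
    (hB : ∀ j (σ : SignType), μH[n] (coneChart m j ∩ coneGraph m j σ ⁻¹' A) ≤ B) :
    μH[n] A ≤ Fintype.card (Fin (n + 1) × SignType) *
      (((NNReal.sqrt (2 * m) + 1 : ℝ≥0) : ℝ≥0∞) ^ (n : ℝ) * B) := by
  have hlip (p : Fin (n + 1) × SignType) : LipschitzOnWith (NNReal.sqrt (2 * m) + 1)
      (coneGraph m p.1 p.2) (coneChart m p.1 ∩ coneGraph m p.1 p.2 ⁻¹' A) :=
    (lipschitzOnWith_coneGraph p.1 hm (by cases p.2 <;> simp)).mono inter_subset_left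
  refine hausdorffMeasure_le_of_subset_iUnion_image n.cast_nonneg hlip (fun k hk => ?_)
    fun p => hB p.1 p.2
  obtain ⟨j, hchart, hgraph⟩ := exists_mem_coneChart_coneGraph_eq hm hmn (hA k hk)
  exact mem_iUnion.2 ⟨(j, SignType.sign (k j)), removeCoord j k,
    ⟨hchart, by rw [mem_preimage, hgraph]; exact hk⟩, hgraph⟩

end TruncatedCone

theorem stmt13_general (d m : ℕ) (hm : 1 ≤ m) (hmd : m ≤ d - 1) :
    ∃ c : ℝ, 0 < c ∧
      ∀ ω : EuclideanSpace ℝ (Fin d),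
        ω ∈ {k : EuclideanSpace ℝ (Fin d) |
            (∑ i : Fin d, if (i : ℕ) < m then (k i) ^ 2 else -((k i) ^ 2)) = 0 ∧
            ‖k‖ ≤ Real.sqrt 2} →
        ω ≠ 0 →
        ∀ β : ℝ, 0 < β →
          μH[(d : ℝ) - 1]
            (Metric.thickening β {p : EuclideanSpace ℝ (Fin d) |
                ∃ t : ℝ, t ≠ 0 ∧ ‖p‖ ≤ Real.sqrt 2 ∧ p = t • ω} ∩
              {k : EuclideanSpace ℝ (Fin d) |
                (∑ i : Fin d, if (i : ℕ) < m then (k i) ^ 2 else -((k i) ^ 2)) = 0 ∧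
                ‖k‖ ≤ Real.sqrt 2}) ≤
            ENNReal.ofReal (c * β ^ (d - 2)) := by
  obtain ⟨n, rfl⟩ : ∃ n, d = n + 1 := ⟨d - 1, by omega⟩
  have : NeZero n := ⟨by omega⟩
  have : (μH[n] : Measure (EuclideanSpace ℝ (Fin n))).IsAddHaarMeasure := by
    simpa using isAddHaarMeasure_hausdorffMeasure (E := EuclideanSpace ℝ (Fin n))
  obtain ⟨C, hC, htube⟩ := exists_addHaar_inter_thickening_smul_Icc_le
    (μH[n] : Measure (EuclideanSpace ℝ (Fin n))) (Real.sqrt_nonneg 2)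
  rw [finrank_euclideanSpace_fin] at htube
  set K : ℝ≥0 := NNReal.sqrt (2 * m) + 1
  refine ⟨Fintype.card (Fin (n + 1) × SignType) * K ^ n * C, by positivity, ?_⟩
  rintro ω - hω β hβ
  rw [show ((n + 1 : ℕ) : ℝ) - 1 = n by push_cast; ring, show n + 1 - 2 = n - 1 by omega]
  refine (TruncatedCone.hausdorffMeasure_le_of_forall_coneForm_eq_zero hm (by omega)
    (B := ENNReal.ofReal (C * β ^ (n - 1))) (fun k hk => hk.2.1) fun j σ => ?_).trans_eq ?_
  · refine (measure_mono fun q hq => ?_).trans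
      (htube (EuclideanSpace.removeCoord j (‖ω‖⁻¹ • ω)) ?_ β hβ)
    · rw [← TruncatedCone.removeCoord_coneGraph j σ q]
      exact EuclideanSpace.removeCoord_mem_closedBall_inter_thickening j hω hq.2.2.2
        (thickening_subset_of_subset β (by rintro _ ⟨t, -, hp⟩; exact ⟨t, hp⟩) hq.2.1)
    · exact (EuclideanSpace.norm_removeCoord_le j _).trans (by simp [norm_smul, hω])
  · rw [ENNReal.rpow_natCast, ← ENNReal.ofReal_natCast, ← ENNReal.ofReal_coe_nnreal,
      ← ENNReal.ofReal_pow K.coe_nonneg, ← ENNReal.ofReal_mul (by positivity),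
      ← ENNReal.ofReal_mul (by positivity)]
    ring_nf

/-- Let `d ≥ 3`, `1 ≤ m ≤ d-1`, `F` the truncated cone
`{k : Q(k) = 0, |k| ≤ √2}` for the signature-`(m, d-m)` form `Q`, and for `0 ≠ ω ∈ F`
let `D(ω) = {tω' : 0 < |t| ≤ 1}` be the pair of rays through `ω` (rescaled to the
truncated cone).  There is a constant `c` (depending only on `d, m`) such that for all
`β > 0`, the `(d-1)`-dimensional Hausdorff measure of `U_β(D(ω)) ∩ F` is at most
`c β^{d-2}`. -/
theorem stmt13 (d m : ℕ) (hd : 3 ≤ d) (hm : 1 ≤ m) (hmd : m ≤ d - 1) :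
    ∃ c : ℝ, 0 < c ∧
      ∀ ω : EuclideanSpace ℝ (Fin d),
        ω ∈ {k : EuclideanSpace ℝ (Fin d) |
            (∑ i : Fin d, if (i : ℕ) < m then (k i) ^ 2 else -((k i) ^ 2)) = 0 ∧
            ‖k‖ ≤ Real.sqrt 2} →
        ω ≠ 0 →
        ∀ β : ℝ, 0 < β →
          μH[(d : ℝ) - 1]
            (Metric.thickening β {p : EuclideanSpace ℝ (Fin d) |
                ∃ t : ℝ, t ≠ 0 ∧ ‖p‖ ≤ Real.sqrt 2 ∧ p = t • ω} ∩
              {k : EuclideanSpace ℝ (Fin d) |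
                (∑ i : Fin d, if (i : ℕ) < m then (k i) ^ 2 else -((k i) ^ 2)) = 0 ∧
                ‖k‖ ≤ Real.sqrt 2}) ≤
            ENNReal.ofReal (c * β ^ (d - 2)) :=
  stmt13_general d m hm hmd
end

section
/- Let d ≥ 3, 1 ≤ m ≤ d−1, and F the truncated cone as above. For ω, ω' ∈ F nonzero, with unit normals n(ω) = ±(θ₁, −θ₂)/√2 at ω = (rθ₁, rθ₂), if ω' = (t'θ₁', t'θ₂') satisfies |(θ₁', φ₂') ± (θ₁, θ₂)| ≥ β for both choices of sign, then |sin θ(n(ω), n(ω'))| ≥ β/(2√2), where θ denotes the angle between the two normal directions. -/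
/-!
The reflection `(a, b) ↦ (a, -b)` preserves inner products, so the angle between the two normals
is the angle between `u = (θ₁, θ₂)` and `v = (θ₁', θ₂')`, both of norm `√2`. For vectors of equal
norm `r` one has `‖v + u‖ ‖v - u‖ = 2 r² sin ∠(v, u)` and `‖v + u‖² + ‖v - u‖² = 4 r²`; when both
factors are at least `β`, the larger one is at least `√2 r`, whence `sin ∠(u, v) ≥ β / (√2 r) = β / 2`.
-/

open InnerProductGeometry Real

section

variable {V : Type*} [NormedAddCommGroup V] [InnerProductSpace ℝ V]

theorem norm_add_mul_norm_sub_eq_of_norm_eq {x y : V} (h : ‖x‖ = ‖y‖) :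
    ‖x + y‖ * ‖x - y‖ = 2 * ‖x‖ ^ 2 * sin (angle x y) := by
  have hcos := cos_angle_mul_norm_mul_norm x y
  rw [← h] at hcos
  rw [← sq_eq_sq₀ (by positivity) (by have := sin_angle_nonneg x y; positivity), mul_pow,
    norm_add_sq_real, norm_sub_sq_real, ← h, ← hcos]
  linear_combination (-4 * ‖x‖ ^ 4) * sin_sq_add_cos_sq (angle x y)

theorem div_sqrt_two_mul_norm_le_sin_angle {x y : V} (h : ‖x‖ = ‖y‖) {β : ℝ} (hβ : 0 ≤ β)
    (hadd : β ≤ ‖x + y‖) (hsub : β ≤ ‖x - y‖) :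
    β / (√2 * ‖x‖) ≤ sin (angle x y) := by
  rcases (norm_nonneg x).eq_or_lt with hx | hx
  · rw [← hx, mul_zero, div_zero]
    exact sin_angle_nonneg x y
  set p := ‖x + y‖
  set q := ‖x - y‖
  have hpar : p ^ 2 + q ^ 2 = 2 * (√2 * ‖x‖) ^ 2 := by
    rw [mul_pow, sq_sqrt zero_le_two, norm_add_sq_real, norm_sub_sq_real, ← h]
    ring
  -- `p²q² - β²(p² + q²)/2 = (p²(q² - β²) + q²(p² - β²))/2 ≥ 0`
  have hpq : β * (√2 * ‖x‖) ≤ p * q := by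
    rw [← pow_le_pow_iff_left₀ (by positivity) (by positivity) two_ne_zero]
    nlinarith [mul_le_mul_of_nonneg_left (pow_le_pow_left₀ hβ hadd 2) (sq_nonneg q),
      mul_le_mul_of_nonneg_left (pow_le_pow_left₀ hβ hsub 2) (sq_nonneg p)]
  have hsq : 2 * ‖x‖ ^ 2 = (√2 * ‖x‖) ^ 2 := by rw [mul_pow, sq_sqrt zero_le_two]
  rw [norm_add_mul_norm_sub_eq_of_norm_eq h, hsq] at hpq
  have hs : 0 < √2 * ‖x‖ := by positivity
  rw [div_le_iff₀ hs]
  nlinarith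

end

section

variable {E F : Type*} [NormedAddCommGroup E] [InnerProductSpace ℝ E]
  [NormedAddCommGroup F] [InnerProductSpace ℝ F]

theorem WithLp.angle_toLp_neg_snd (x₁ y₁ : E) (x₂ y₂ : F) :
    angle (WithLp.toLp 2 (x₁, -x₂)) (WithLp.toLp 2 (y₁, -y₂)) =
      angle (WithLp.toLp 2 (x₁, x₂)) (WithLp.toLp 2 (y₁, y₂)) := by
  simp only [angle, WithLp.prod_inner_apply, WithLp.prod_norm_eq_of_L2, inner_neg_neg, norm_neg,
    WithLp.toLp_fst, WithLp.toLp_snd]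

end

theorem WithLp.norm_toLp_of_norm_eq_one {E F : Type*} [SeminormedAddCommGroup E]
    [SeminormedAddCommGroup F] {x₁ : E} {x₂ : F} (h₁ : ‖x₁‖ = 1) (h₂ : ‖x₂‖ = 1) :
    ‖WithLp.toLp 2 (x₁, x₂)‖ = √2 := by
  rw [WithLp.prod_norm_eq_of_L2]
  simp [h₁, h₂]
  norm_num

theorem stmt14_general (d m : ℕ)
    (θ₁ θ₁' : EuclideanSpace ℝ (Fin m)) (θ₂ θ₂' : EuclideanSpace ℝ (Fin (d - m)))
    (h₁ : ‖θ₁‖ = 1) (h₂ : ‖θ₂‖ = 1) (h₁' : ‖θ₁'‖ = 1) (h₂' : ‖θ₂'‖ = 1)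
    (β : ℝ) (hβ : 0 < β)
    (hplus : β ≤ ‖(WithLp.equiv 2 (EuclideanSpace ℝ (Fin m) × EuclideanSpace ℝ (Fin (d - m)))).symm
        (θ₁' + θ₁, θ₂' + θ₂)‖)
    (hminus : β ≤ ‖(WithLp.equiv 2 (EuclideanSpace ℝ (Fin m) × EuclideanSpace ℝ (Fin (d - m)))).symm
        (θ₁' - θ₁, θ₂' - θ₂)‖) :
    β / (2 * Real.sqrt 2) ≤
      Real.sin (InnerProductGeometry.angle
        ((Real.sqrt 2)⁻¹ •
          (WithLp.equiv 2 (EuclideanSpace ℝ (Fin m) × EuclideanSpace ℝ (Fin (d - m)))).symm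
            (θ₁, -θ₂))
        ((Real.sqrt 2)⁻¹ •
          (WithLp.equiv 2 (EuclideanSpace ℝ (Fin m) × EuclideanSpace ℝ (Fin (d - m)))).symm
            (θ₁', -θ₂'))) := by
  simp only [WithLp.equiv_symm_apply, ← Prod.mk_add_mk, ← Prod.mk_sub_mk, WithLp.toLp_add,
    WithLp.toLp_sub] at hplus hminus ⊢
  rw [angle_smul_smul (by positivity), WithLp.angle_toLp_neg_snd, angle_comm]
  have hu := WithLp.norm_toLp_of_norm_eq_one h₁ h₂
  have hv := WithLp.norm_toLp_of_norm_eq_one h₁' h₂'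
  have hsin := div_sqrt_two_mul_norm_le_sin_angle (hv.trans hu.symm) hβ.le hplus hminus
  rw [hv, mul_self_sqrt zero_le_two] at hsin
  refine le_trans (div_le_div_of_nonneg_left hβ.le two_pos ?_) hsin
  exact le_mul_of_one_le_right zero_le_two (one_le_sqrt.2 one_le_two)

/-- On the truncated cone `F = {(rθ₁, rθ₂)}`, the unit normal direction
at `(rθ₁, rθ₂)` is `±(θ₁, -θ₂)/√2`.  If `|(θ₁', θ₂') ± (θ₁, θ₂)| ≥ β` for both choices
of sign, then `|sin θ(n(ω), n(ω'))| ≥ β/(2√2)`. -/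
theorem stmt14 (d m : ℕ) (hd : 3 ≤ d) (hm : 1 ≤ m) (hmd : m ≤ d - 1)
    (θ₁ θ₁' : EuclideanSpace ℝ (Fin m)) (θ₂ θ₂' : EuclideanSpace ℝ (Fin (d - m)))
    (h₁ : ‖θ₁‖ = 1) (h₂ : ‖θ₂‖ = 1) (h₁' : ‖θ₁'‖ = 1) (h₂' : ‖θ₂'‖ = 1)
    (β : ℝ) (hβ : 0 < β)
    (hplus : β ≤ ‖(WithLp.equiv 2 (EuclideanSpace ℝ (Fin m) × EuclideanSpace ℝ (Fin (d - m)))).symm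
        (θ₁' + θ₁, θ₂' + θ₂)‖)
    (hminus : β ≤ ‖(WithLp.equiv 2 (EuclideanSpace ℝ (Fin m) × EuclideanSpace ℝ (Fin (d - m)))).symm
        (θ₁' - θ₁, θ₂' - θ₂)‖) :
    β / (2 * Real.sqrt 2) ≤
      Real.sin (InnerProductGeometry.angle
        ((Real.sqrt 2)⁻¹ •
          (WithLp.equiv 2 (EuclideanSpace ℝ (Fin m) × EuclideanSpace ℝ (Fin (d - m)))).symm
            (θ₁, -θ₂))
        ((Real.sqrt 2)⁻¹ •
          (WithLp.equiv 2 (EuclideanSpace ℝ (Fin m) × EuclideanSpace ℝ (Fin (d - m)))).symm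
            (θ₁', -θ₂'))) :=
  stmt14_general d m θ₁ θ₁' θ₂ θ₂' h₁ h₂ h₁' h₂' β hβ hplus hminus
end
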